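/- arXiv:2006.14996 — 3 statements merged into one kernel-verified Lean document; each statement's English description precedes it below -/
import Mathlib

section
/- For every n ≥ 2, the linear map φ̃_{−1,n} : ℚSP_{−1,n} → ℚK^{−1}_n is surjective. Here SP_{−1,n} is the set of set partitions of [n] into exactly 2 nonempty parts, and K^{−1}_n is the set of subsets of [n] of even cardinality at least 2. -/
/-! Common definitions: free ℚ-vector spaces on finite sets of subsets/partitions of
`[n] = {1,…,n}`, the pairing ⟨Π,T⟩, the maps φ̃, α, β, π̃*, π̃_*, odd, even, γ,
and the relation subspace `R_{d,n}`. -/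

/-- `B` is a set partition of `[n] = {1,…,n}`: the parts are nonempty, pairwise
disjoint, and their union is `{1,…,n}`. -/
def IsPartition (n : ℕ) (B : Finset (Finset ℕ)) : Prop :=
  (∀ P ∈ B, P.Nonempty) ∧ (∀ P ∈ B, ∀ Q ∈ B, P ≠ Q → P ∩ Q = ∅) ∧
    B.sup id = Finset.Icc 1 n

instance (n : ℕ) (B : Finset (Finset ℕ)) : Decidable (IsPartition n B) := by
  unfold IsPartition; infer_instance

/-- `SP_{d,n}`: the set of set partitions of `[n]` into exactly `d+3` nonempty parts. -/
def SPf (d : ℤ) (n : ℕ) : Finset (Finset (Finset ℕ)) :=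
  ((Finset.Icc 1 n).powerset.powerset).filter
    (fun B => IsPartition n B ∧ (B.card : ℤ) = d + 3)

/-- `K^d_n = {T ⊆ [n] : |T| ≥ d+3, |T| ≡ d+3 (mod 2)}`. -/
def Kf (d : ℤ) (n : ℕ) : Finset (Finset ℕ) :=
  (Finset.Icc 1 n).powerset.filter
    (fun T => d + 3 ≤ (T.card : ℤ) ∧ (T.card : ℤ) % 2 = (d + 3) % 2)

/-- The basis vector of the free vector space `ℚS = (↥S → ℚ)` corresponding to `a`
(the zero vector if `a ∉ S`). -/
def bvec {A : Type*} [DecidableEq A] (S : Finset A) (a : A) : ↥S → ℚ :=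
  fun x => if x.val = a then 1 else 0

/-- The pairing `⟨B,T⟩`: `1` if `T` meets every part of `B`, else `0`. -/
def pairPT (B : Finset (Finset ℕ)) (T : Finset ℕ) : ℚ :=
  if ∀ P ∈ B, (P ∩ T).Nonempty then 1 else 0

/-- The linear map `φ̃_{d,n} : ℚSP_{d,n} → ℚK^d_n`, `Π ↦ Σ_{T ∈ K^d_n} ⟨Π,T⟩·T`. -/
noncomputable def phiT (d : ℤ) (n : ℕ) : (↥(SPf d n) → ℚ) →ₗ[ℚ] (↥(Kf d n) → ℚ) :=
  Matrix.mulVecLin (Matrix.of fun T B => pairPT B.val T.val)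

/-- Generic "insert `n+1`" map between free vector spaces on finite families of
subsets of `ℕ`: sends the basis vector of `T` to the basis vector of `T ∪ {n+1}`. -/
noncomputable def insMap (n : ℕ) (S S' : Finset (Finset ℕ)) :
    (↥S → ℚ) →ₗ[ℚ] (↥S' → ℚ) :=
  Matrix.mulVecLin (Matrix.of fun T' T =>
    if T'.val = insert (n+1) T.val then (1 : ℚ) else 0)

/-- Generic "forget `n+1`" map: sends the basis vector of `T` to itself if
`n+1 ∉ T` and to `0` otherwise. -/
noncomputable def resMap (n : ℕ) (S S' : Finset (Finset ℕ)) :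
    (↥S → ℚ) →ₗ[ℚ] (↥S' → ℚ) :=
  Matrix.mulVecLin (Matrix.of fun T' T =>
    if T.val = T'.val ∧ n+1 ∉ T.val then (1 : ℚ) else 0)

/-- `α : ℚK^d_n → ℚK^{d+1}_{n+1}`, `T ↦ T ∪ {n+1}`. -/
noncomputable def alphaK (d : ℤ) (n : ℕ) : (↥(Kf d n) → ℚ) →ₗ[ℚ] (↥(Kf (d+1) (n+1)) → ℚ) :=
  insMap n (Kf d n) (Kf (d+1) (n+1))

/-- `β : ℚK^d_{n+1} → ℚK^d_n`, `T ↦ T` if `n+1 ∉ T`, else `T ↦ 0`. -/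
noncomputable def betaK (d : ℤ) (n : ℕ) : (↥(Kf d (n+1)) → ℚ) →ₗ[ℚ] (↥(Kf d n) → ℚ) :=
  resMap n (Kf d (n+1)) (Kf d n)

/-- `π̃^* : ℚSP_{d,n} → ℚSP_{d+1,n+1}`, `Π ↦ Π ∪ {{n+1}}`. -/
noncomputable def piUp (d : ℤ) (n : ℕ) :
    (↥(SPf d n) → ℚ) →ₗ[ℚ] (↥(SPf (d+1) (n+1)) → ℚ) :=
  Matrix.mulVecLin (Matrix.of fun B' B =>
    if B'.val = insert {n+1} B.val then (1 : ℚ) else 0)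

/-- `π̃_* : ℚSP_{d,n+1} → ℚSP_{d,n}`: a partition `Π` of `[n+1]` goes to `0` if
`{n+1}` is a part of `Π`, and otherwise to `{P \ {n+1} : P ∈ Π}`. -/
noncomputable def piDown (d : ℤ) (n : ℕ) :
    (↥(SPf d (n+1)) → ℚ) →ₗ[ℚ] (↥(SPf d n) → ℚ) :=
  Matrix.mulVecLin (Matrix.of fun B' B =>
    if ({n+1} : Finset ℕ) ∉ B.val ∧
        B'.val = B.val.image (fun P => P.erase (n+1)) then (1 : ℚ) else 0)

/-- The subspace `R_{d,n} ⊆ ℚSP_{d,n}` spanned by the Keel/Kontsevich–Manin type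
relations: for every partition `S` of `[n]` with `d+4` parts and distinct parts
`P₁,P₂,P₃,P₄ ∈ S`, the element
`{P₁∪P₂,…} + {P₃∪P₄,…} − {P₁∪P₃,…} − {P₂∪P₄,…}`. -/
noncomputable def Rsub (d : ℤ) (n : ℕ) : Submodule ℚ (↥(SPf d n) → ℚ) :=
  Submodule.span ℚ { v | ∃ S : Finset (Finset ℕ), ∃ P1 P2 P3 P4 : Finset ℕ,
    IsPartition n S ∧ (S.card : ℤ) = d + 4 ∧
    P1 ∈ S ∧ P2 ∈ S ∧ P3 ∈ S ∧ P4 ∈ S ∧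
    P1 ≠ P2 ∧ P1 ≠ P3 ∧ P1 ≠ P4 ∧ P2 ≠ P3 ∧ P2 ≠ P4 ∧ P3 ≠ P4 ∧
    v = bvec (SPf d n) (insert (P1 ∪ P2) ((S.erase P1).erase P2))
      + bvec (SPf d n) (insert (P3 ∪ P4) ((S.erase P3).erase P4))
      - bvec (SPf d n) (insert (P1 ∪ P3) ((S.erase P1).erase P3))
      - bvec (SPf d n) (insert (P2 ∪ P4) ((S.erase P2).erase P4)) }

/-- `F_n = {(P₁,P₂) : P₁ ∪ P₂ = [n], P₁ ∩ P₂ = ∅, 1 ∈ P₁}`. -/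
def Fset (n : ℕ) : Finset (Finset ℕ × Finset ℕ) :=
  ((Finset.Icc 1 n).powerset ×ˢ (Finset.Icc 1 n).powerset).filter
    (fun p => p.1 ∪ p.2 = Finset.Icc 1 n ∧ p.1 ∩ p.2 = ∅ ∧ 1 ∈ p.1)

/-- `E_n`: subsets of `[n]` of even cardinality. -/
def Eset (n : ℕ) : Finset (Finset ℕ) :=
  (Finset.Icc 1 n).powerset.filter (fun T => T.card % 2 = 0)

/-- `O_n`: subsets of `[n]` of odd cardinality. -/
def Oset (n : ℕ) : Finset (Finset ℕ) :=
  (Finset.Icc 1 n).powerset.filter (fun T => T.card % 2 = 1)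

/-- `odd_n : ℚF_n → ℚO_n`, `(P₁,P₂) ↦ −Σ_{T⊆P₁, |T| odd} T + Σ_{T⊆P₂, |T| odd} T`. -/
noncomputable def oddMap (n : ℕ) : (↥(Fset n) → ℚ) →ₗ[ℚ] (↥(Oset n) → ℚ) :=
  Matrix.mulVecLin (Matrix.of fun T p =>
    (if T.val ⊆ p.val.1 then (-1 : ℚ) else 0) + (if T.val ⊆ p.val.2 then (1 : ℚ) else 0))

/-- `even_n : ℚF_n → ℚE_n`, `(P₁,P₂) ↦ −Σ_{T⊆P₁, |T| even} T − Σ_{T⊆P₂, |T| even} T`. -/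
noncomputable def evenMap (n : ℕ) : (↥(Fset n) → ℚ) →ₗ[ℚ] (↥(Eset n) → ℚ) :=
  Matrix.mulVecLin (Matrix.of fun T p =>
    (if T.val ⊆ p.val.1 then (-1 : ℚ) else 0) + (if T.val ⊆ p.val.2 then (-1 : ℚ) else 0))

/-- `γ : ℚF_n → ℚF_{n+1}`, `(P₁,P₂) ↦ (P₁∪{n+1},P₂) − (P₁,P₂∪{n+1})`. -/
noncomputable def gammaMap (n : ℕ) : (↥(Fset n) → ℚ) →ₗ[ℚ] (↥(Fset (n+1)) → ℚ) :=
  Matrix.mulVecLin (Matrix.of fun q p =>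
    (if q.val = (insert (n+1) p.val.1, p.val.2) then (1 : ℚ) else 0)
    - (if q.val = (p.val.1, insert (n+1) p.val.2) then (1 : ℚ) else 0))

/-- `π̃'_* : ℚF_{n+1} → ℚF_n`, `(P₁,P₂) ↦ (P₁∖{n+1}, P₂∖{n+1})`. -/
noncomputable def piDownF (n : ℕ) : (↥(Fset (n+1)) → ℚ) →ₗ[ℚ] (↥(Fset n) → ℚ) :=
  Matrix.mulVecLin (Matrix.of fun q p =>
    if q.val = (p.val.1.erase (n+1), p.val.2.erase (n+1)) then (1 : ℚ) else 0)

-- membership facts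
lemma Kf_mem {n : ℕ} {T : Finset ℕ} (h : T ∈ Kf (-1) n) :
    T ⊆ Finset.Icc 1 n ∧ 2 ≤ T.card ∧ T.card % 2 = 0 := by
  simp only [Kf, Finset.mem_filter, Finset.mem_powerset] at h
  refine ⟨h.1, ?_, ?_⟩ <;> omega

lemma SPf_struct {n : ℕ} {B : Finset (Finset ℕ)} (hB : B ∈ SPf (-1) n) :
    ∀ P ∈ B, P ⊆ Finset.Icc 1 n ∧ P ≠ ∅ ∧ P ≠ Finset.Icc 1 n ∧
      B = {P, Finset.Icc 1 n \ P} := by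
  simp only [SPf, Finset.mem_filter, Finset.mem_powerset] at hB
  obtain ⟨hpow, hpart, hcard⟩ := hB
  have hcard2 : B.card = 2 := by
    have : (B.card : ℤ) = 2 := by rw [hcard]; norm_num
    exact_mod_cast this
  obtain ⟨x, y, hxy, rfl⟩ := Finset.card_eq_two.mp hcard2
  obtain ⟨hne, hdisj, hsup⟩ := hpart
  have hsup' : x ∪ y = Finset.Icc 1 n := by
    rw [← hsup]; simp [Finset.sup_insert, Finset.sup_singleton]
  have hd : x ∩ y = ∅ := hdisj x (by simp) y (by simp) hxy
  have key : ∀ P Q : Finset ℕ, P ∪ Q = Finset.Icc 1 n → P ∩ Q = ∅ →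
      P.Nonempty → Q.Nonempty →
      P ⊆ Finset.Icc 1 n ∧ P ≠ ∅ ∧ P ≠ Finset.Icc 1 n ∧
        Q = Finset.Icc 1 n \ P := by
    intro P Q hu hi hP hQ
    have hsub : P ⊆ Finset.Icc 1 n := hu ▸ Finset.subset_union_left
    have hQe : Q = Finset.Icc 1 n \ P := by
      ext a
      simp only [Finset.mem_sdiff, ← hu, Finset.mem_union]
      constructor
      · intro ha
        exact ⟨Or.inr ha, fun haP => by
          have : a ∈ P ∩ Q := Finset.mem_inter.mpr ⟨haP, ha⟩
          simp [hi] at this⟩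
      · rintro ⟨h1 | h1, h2⟩
        · exact absurd h1 h2
        · exact h1
    refine ⟨hsub, Finset.nonempty_iff_ne_empty.mp hP, ?_, hQe⟩
    obtain ⟨b, hb⟩ := hQ
    intro hPI
    rw [hQe, hPI] at hb
    simp only [Finset.mem_sdiff] at hb
    exact hb.2 hb.1
  intro P hP
  rcases Finset.mem_insert.mp hP with rfl | hP
  · obtain ⟨h1, h2, h3, h4⟩ := key P y hsup' hd (hne P (by simp)) (hne y (by simp))
    exact ⟨h1, h2, h3, by rw [← h4]⟩
  · rw [Finset.mem_singleton] at hP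
    subst hP
    have hd' : P ∩ x = ∅ := by rw [Finset.inter_comm]; exact hd
    have hu' : P ∪ x = Finset.Icc 1 n := by rw [Finset.union_comm]; exact hsup'
    obtain ⟨h1, h2, h3, h4⟩ := key P x hu' hd' (hne P (by simp)) (hne x (by simp))
    refine ⟨h1, h2, h3, ?_⟩
    rw [← h4]
    exact Finset.pair_comm x P

lemma SPf_of_part {n : ℕ} {P : Finset ℕ} (h1 : P ⊆ Finset.Icc 1 n) (h2 : P ≠ ∅)
    (h3 : P ≠ Finset.Icc 1 n) : ({P, Finset.Icc 1 n \ P} : Finset (Finset ℕ)) ∈ SPf (-1) n := by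
  have hPd : P ≠ Finset.Icc 1 n \ P := by
    intro h
    obtain ⟨a, ha⟩ := Finset.nonempty_iff_ne_empty.mpr h2
    have := h ▸ ha
    simp at this
    exact this.2 ha
  have hcne : (Finset.Icc 1 n \ P).Nonempty := by
    rw [Finset.nonempty_iff_ne_empty]
    intro h
    exact h3 (Finset.Subset.antisymm h1 (by
      intro a ha
      by_contra hna
      have : a ∈ Finset.Icc 1 n \ P := Finset.mem_sdiff.mpr ⟨ha, hna⟩
      simp [h] at this))
  simp only [SPf, Finset.mem_filter, Finset.mem_powerset]
  refine ⟨?_, ⟨?_, ?_, ?_⟩, ?_⟩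
  · intro Q hQ
    rw [Finset.mem_powerset]
    rcases Finset.mem_insert.mp hQ with rfl | hQ
    · exact h1
    · rw [Finset.mem_singleton] at hQ; subst hQ; exact Finset.sdiff_subset
  · intro Q hQ
    rcases Finset.mem_insert.mp hQ with rfl | hQ
    · exact Finset.nonempty_iff_ne_empty.mpr h2
    · rw [Finset.mem_singleton] at hQ; subst hQ; exact hcne
  · intro Q hQ R hR hne
    rcases Finset.mem_insert.mp hQ with rfl | hQ <;>
      rcases Finset.mem_insert.mp hR with rfl | hR
    · exact absurd rfl hne
    · rw [Finset.mem_singleton] at hR; subst hR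
      rw [← Finset.disjoint_iff_inter_eq_empty]
      exact Finset.disjoint_sdiff
    · rw [Finset.mem_singleton] at hQ; subst hQ
      rw [← Finset.disjoint_iff_inter_eq_empty]
      exact Finset.sdiff_disjoint
    · rw [Finset.mem_singleton] at hQ hR; subst hQ; subst hR
      exact absurd rfl hne
  · rw [Finset.sup_insert, Finset.sup_singleton, id_eq, id_eq]
    show P ∪ (Finset.Icc 1 n \ P) = Finset.Icc 1 n
    rw [Finset.union_sdiff_of_subset h1]
  · rw [Finset.card_insert_of_notMem (by simpa using hPd), Finset.card_singleton]
    norm_num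

lemma pair_eq {n : ℕ} {B : Finset (Finset ℕ)} (hB : B ∈ SPf (-1) n) {P : Finset ℕ}
    (hP : P ∈ B) {T' : Finset ℕ} (hT' : T' ∈ Kf (-1) n) :
    pairPT B T' = 1 - (if T' ⊆ P then (1:ℚ) else 0) - (if T' ∩ P = ∅ then 1 else 0) := by
  obtain ⟨hsub, hne, hnI, hBe⟩ := SPf_struct hB P hP
  obtain ⟨hT'sub, hT'card, _⟩ := Kf_mem hT'
  have hT'ne : T'.Nonempty := Finset.card_pos.mp (by omega)
  rw [hBe]
  unfold pairPT
  have hcond : (∀ Q ∈ ({P, Finset.Icc 1 n \ P} : Finset (Finset ℕ)), (Q ∩ T').Nonempty)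
      ↔ ((P ∩ T').Nonempty ∧ ((Finset.Icc 1 n \ P) ∩ T').Nonempty) := by
    simp only [Finset.mem_insert, Finset.mem_singleton, forall_eq_or_imp, forall_eq]
  by_cases h1 : T' ⊆ P
  · have h2 : ¬ (T' ∩ P = ∅) := by
      rw [Finset.inter_eq_left.mpr h1]
      exact Finset.nonempty_iff_ne_empty.mp hT'ne
    have hcF : ¬ ((Finset.Icc 1 n \ P) ∩ T').Nonempty := by
      rw [Finset.not_nonempty_iff_eq_empty, ← Finset.disjoint_iff_inter_eq_empty]
      exact Disjoint.mono_right h1 Finset.sdiff_disjoint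
    rw [if_neg (fun h => hcF (hcond.mp h).2), if_pos h1, if_neg h2]
    ring
  · by_cases h2 : T' ∩ P = ∅
    · have hcF : ¬ (P ∩ T').Nonempty := by
        rw [Finset.not_nonempty_iff_eq_empty, Finset.inter_comm]
        exact h2
      rw [if_neg (fun h => hcF (hcond.mp h).1), if_neg h1, if_pos h2]
      ring
    · have hcT : (∀ Q ∈ ({P, Finset.Icc 1 n \ P} : Finset (Finset ℕ)), (Q ∩ T').Nonempty) := by
        rw [hcond]
        constructor
        · rw [Finset.nonempty_iff_ne_empty, Ne, Finset.inter_comm]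
          exact h2
        · obtain ⟨a, haT, haP⟩ := Finset.not_subset.mp h1
          exact ⟨a, Finset.mem_inter.mpr ⟨Finset.mem_sdiff.mpr ⟨hT'sub haT, haP⟩, haT⟩⟩
      rw [if_pos hcT, if_neg h1, if_neg h2]
      ring

lemma biUnion_SPf (n : ℕ) (g : Finset ℕ → ℚ) :
    ∑ B ∈ SPf (-1) n, ∑ P ∈ B, g P
      = ∑ P ∈ (Finset.Icc 1 n).powerset.filter
          (fun P => P ≠ ∅ ∧ P ≠ Finset.Icc 1 n), g P := by
  have hdisj : Set.PairwiseDisjoint ↑(SPf (-1) n) (id : Finset (Finset ℕ) → Finset (Finset ℕ)) := by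
    intro B hB B' hB' hne
    simp only [Finset.coe_mem, Finset.mem_coe] at hB hB'
    rw [Function.onFun, Finset.disjoint_left]
    intro P hPB hPB'
    exact hne (((SPf_struct hB P hPB).2.2.2).trans ((SPf_struct hB' P hPB').2.2.2).symm)
  have := (Finset.sum_biUnion (s := SPf (-1) n) (t := id) (f := g) hdisj).symm
  simp only [id_eq] at this
  rw [this]
  congr 1
  ext P
  simp only [Finset.mem_biUnion, id_eq, Finset.mem_filter, Finset.mem_powerset]
  constructor
  · rintro ⟨B, hB, hPB⟩
    obtain ⟨h1, h2, h3, _⟩ := SPf_struct hB P hPB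
    exact ⟨h1, h2, h3⟩
  · rintro ⟨h1, h2, h3⟩
    exact ⟨{P, Finset.Icc 1 n \ P}, SPf_of_part h1 h2 h3, Finset.mem_insert_self _ _⟩

noncomputable def fE : ℕ → ℚ
  | 0 => 1
  | (a+1) => -∑ k ∈ (Finset.range (a+1)).attach,
      if (k:ℕ) % 2 = 0 then (((a+1).choose k : ℕ) : ℚ) * fE k else 0
  decreasing_by exact Finset.mem_range.mp k.2

lemma fE_succ (a : ℕ) : fE (a+1)
    = -∑ k ∈ Finset.range (a+1), if k % 2 = 0 then (((a+1).choose k : ℕ) : ℚ) * fE k else 0 := by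
  rw [fE]
  exact congrArg Neg.neg (Finset.sum_attach (Finset.range (a+1))
    (fun k => if k % 2 = 0 then (((a+1).choose k : ℕ) : ℚ) * fE k else 0))

lemma fE_key (m : ℕ) (hm : m % 2 = 0) :
    ∑ k ∈ Finset.range (m+1), (if k % 2 = 0 then ((m.choose k : ℕ) : ℚ) * fE k else 0)
      = if m = 0 then 1 else 0 := by
  rcases m with _ | a
  · simp [fE]
  · rw [Finset.sum_range_succ, fE_succ]
    simp only [Nat.choose_self, Nat.cast_one, one_mul, if_pos hm]
    simp

lemma fE_powerset (S : Finset ℕ) (hS : S.card % 2 = 0) :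
    ∑ A ∈ S.powerset.filter (fun A => A.card % 2 = 0), fE A.card
      = if S = ∅ then 1 else 0 := by
  rw [Finset.sum_filter, Finset.sum_powerset]
  have : ∀ j ∈ Finset.range (S.card + 1),
      (∑ A ∈ S.powersetCard j, if A.card % 2 = 0 then fE A.card else 0)
        = (if j % 2 = 0 then ((S.card.choose j : ℕ) : ℚ) * fE j else 0) := by
    intro j hj
    have : ∀ A ∈ S.powersetCard j, (if A.card % 2 = 0 then fE A.card else 0)
        = (if j % 2 = 0 then fE j else 0) := by
      intro A hA
      rw [(Finset.mem_powersetCard.mp hA).2]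
    rw [Finset.sum_congr rfl this, Finset.sum_const, Finset.card_powersetCard]
    by_cases h : j % 2 = 0 <;> simp [h, mul_comm]
  rw [Finset.sum_congr rfl this, fE_key S.card hS]
  simp [Finset.card_eq_zero]

-- Lemma A
lemma sum_chi (T : Finset ℕ) : ∀ (U : Finset ℕ),
    ∑ P ∈ U.powerset, (-1:ℚ)^((T ∩ P).card) = if T ∩ U = ∅ then (2:ℚ)^U.card else 0 := by
  intro U
  induction U using Finset.induction_on with
  | empty => simp
  | @insert a U ha ih =>
    rw [Finset.powerset_insert, Finset.sum_union, Finset.sum_image]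
    · have himg : ∀ P ∈ U.powerset, ((T ∩ insert a P).card : ℕ)
          = (T ∩ P).card + (if a ∈ T then 1 else 0) := by
        intro P hP
        have haP : a ∉ P := fun h => ha (Finset.mem_powerset.mp hP h)
        by_cases haT : a ∈ T
        · rw [Finset.inter_insert_of_mem haT, Finset.card_insert_of_notMem
            (by simp [haP]), if_pos haT]
        · rw [Finset.inter_insert_of_notMem haT, if_neg haT, add_zero]
      have : ∑ P ∈ U.powerset, (-1:ℚ)^((T ∩ insert a P).card)
          = (if a ∈ T then (-1:ℚ) else 1) * ∑ P ∈ U.powerset, (-1:ℚ)^((T ∩ P).card) := by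
        rw [Finset.mul_sum]
        refine Finset.sum_congr rfl fun P hP => ?_
        rw [himg P hP]
        by_cases haT : a ∈ T <;> simp [haT, pow_succ, mul_comm]
      rw [this, ih]
      by_cases haT : a ∈ T
      · have h1 : T ∩ insert a U ≠ ∅ := by
          intro h
          have : a ∈ T ∩ insert a U := Finset.mem_inter.mpr ⟨haT, Finset.mem_insert_self a U⟩
          simp [h] at this
        rw [if_neg h1, if_pos haT]
        ring
      · have h2 : T ∩ insert a U = T ∩ U := by
          rw [Finset.inter_insert_of_notMem haT]
        rw [h2, if_neg haT, Finset.card_insert_of_notMem ha]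
        by_cases h : T ∩ U = ∅ <;> simp [h, pow_succ] <;> ring
    · -- injectivity for sum_image
      intro P hP Q hQ h
      have haP : a ∉ P := fun hh => ha (Finset.mem_powerset.mp hP hh)
      have haQ : a ∉ Q := fun hh => ha (Finset.mem_powerset.mp hQ hh)
      rw [← Finset.erase_insert haP, ← Finset.erase_insert haQ, h]
    · -- disjoint
      rw [Finset.disjoint_left]
      intro P hP hPimg
      obtain ⟨Q, hQ, rfl⟩ := Finset.mem_image.mp hPimg
      exact ha (Finset.mem_powerset.mp hP (Finset.mem_insert_self a Q))

-- Lemma C: the "disjoint from T'" filter is a smaller powerset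
lemma filter_disj_powerset (U T' : Finset ℕ) :
    U.powerset.filter (fun P => P ∩ T' = ∅) = (U \ T').powerset := by
  ext P
  simp only [Finset.mem_filter, Finset.mem_powerset, Finset.subset_sdiff]
  rw [← Finset.disjoint_iff_inter_eq_empty, and_congr_right_iff]
  intro _
  rfl

lemma sum_chi_disj (T U T' : Finset ℕ) (hT : T ⊆ U) :
    ∑ P ∈ U.powerset.filter (fun P => P ∩ T' = ∅), (-1:ℚ)^((T ∩ P).card)
      = if T ⊆ T' then (2:ℚ)^((U \ T').card) else 0 := by
  rw [filter_disj_powerset, sum_chi]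
  have h1 : T ∩ (U \ T') = T \ T' := by
    rw [← Finset.inter_sdiff_assoc, Finset.inter_eq_left.mpr hT]
  rw [h1]
  by_cases h : T ⊆ T' <;> simp [Finset.sdiff_eq_empty_iff_subset, h]

-- Lemma B via complementation
lemma sum_chi_supset (T U T' : Finset ℕ) (hT : T ⊆ U) (hTe : T.card % 2 = 0)
    (hT' : T' ⊆ U) :
    ∑ P ∈ U.powerset.filter (fun P => T' ⊆ P), (-1:ℚ)^((T ∩ P).card)
      = if T ⊆ T' then (2:ℚ)^((U \ T').card) else 0 := by
  rw [← sum_chi_disj T U T' hT]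
  refine Finset.sum_nbij' (fun P => U \ P) (fun P => U \ P) ?_ ?_ ?_ ?_ ?_
  · intro P hP
    simp only [Finset.mem_filter, Finset.mem_powerset] at hP ⊢
    exact ⟨Finset.sdiff_subset, by
      rw [← Finset.disjoint_iff_inter_eq_empty]
      exact Disjoint.mono_right hP.2 Finset.sdiff_disjoint⟩
  · intro P hP
    simp only [Finset.mem_filter, Finset.mem_powerset,
      ← Finset.disjoint_iff_inter_eq_empty] at hP ⊢
    refine ⟨Finset.sdiff_subset, fun x hx => Finset.mem_sdiff.mpr
      ⟨hT' hx, fun hxP => ?_⟩⟩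
    exact (Finset.disjoint_left.mp hP.2) hxP hx
  · intro P hP
    simp only [Finset.mem_filter, Finset.mem_powerset] at hP
    exact Finset.sdiff_sdiff_eq_self hP.1
  · intro P hP
    simp only [Finset.mem_filter, Finset.mem_powerset] at hP
    exact Finset.sdiff_sdiff_eq_self hP.1
  · intro P hP
    simp only [Finset.mem_filter, Finset.mem_powerset] at hP
    -- (-1)^|T∩P| = (-1)^|T∩(U\P)|
    have hsplit : (T ∩ P).card + (T ∩ (U \ P)).card = T.card := by
      have h1 : T ∩ (U \ P) = T \ P := by
        rw [← Finset.inter_sdiff_assoc, Finset.inter_eq_left.mpr hT]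
      rw [h1]
      exact Finset.card_inter_add_card_sdiff T P
    rw [neg_one_pow_eq_pow_mod_two (n := (T ∩ P).card),
      neg_one_pow_eq_pow_mod_two (n := (T ∩ (U \ P)).card)]
    congr 1
    omega

noncomputable def Xfun (n : ℕ) (T0 : Finset ℕ) (b : Finset (Finset ℕ)) : ℚ :=
  ∑ P ∈ b, ∑ A ∈ ((Finset.Icc 1 n) \ T0).powerset.filter (fun A => A.card % 2 = 0),
    fE A.card * (-1:ℚ)^(((T0 ∪ A) ∩ P).card)

lemma key_sum (n : ℕ) (T0 T' : Finset ℕ) (h0 : T0 ∈ Kf (-1) n) (h' : T' ∈ Kf (-1) n) :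
    ∑ B ∈ SPf (-1) n, pairPT B T' * Xfun n T0 B
      = if T' = T0 then -2 * (2:ℚ)^((Finset.Icc 1 n \ T').card) else 0 := by
  obtain ⟨h0sub, h0card, h0par⟩ := Kf_mem h0
  obtain ⟨h'sub, h'card, h'par⟩ := Kf_mem h'
  set U := Finset.Icc 1 n with hU
  set evens := (U \ T0).powerset.filter (fun A => A.card % 2 = 0) with hevens
  set w : Finset ℕ → ℚ := fun P => ∑ A ∈ evens, fE A.card * (-1:ℚ)^(((T0 ∪ A) ∩ P).card)
    with hw
  set g : Finset ℕ → ℚ := fun P =>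
    (1 - (if T' ⊆ P then (1:ℚ) else 0) - (if T' ∩ P = ∅ then 1 else 0)) * w P with hg
  -- Step 1: rewrite the sum as a double sum over parts
  have step1 : ∑ B ∈ SPf (-1) n, pairPT B T' * Xfun n T0 B
      = ∑ B ∈ SPf (-1) n, ∑ P ∈ B, g P := by
    refine Finset.sum_congr rfl fun B hB => ?_
    rw [Xfun, Finset.mul_sum]
    refine Finset.sum_congr rfl fun P hP => ?_
    rw [hg, pair_eq hB hP h']
  rw [step1, biUnion_SPf]
  -- Step 2: extend to the full powerset
  have step2 : ∑ P ∈ U.powerset.filter (fun P => P ≠ ∅ ∧ P ≠ U), g P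
      = ∑ P ∈ U.powerset, g P := by
    have hT'ne : T' ≠ ∅ := by
      intro h
      rw [h] at h'card
      simp at h'card
    refine Finset.sum_filter_of_ne fun P hP hg0 => ?_
    constructor
    · rintro rfl
      apply hg0
      simp [hg, Finset.subset_empty, hT'ne]
    · rintro rfl
      apply hg0
      have h1 : T' ⊆ U := h'sub
      simp [hg, h1, Finset.inter_eq_left.mpr h1, hT'ne]
  rw [step2]
  -- Step 3: swap sums and evaluate the character sums
  have step3 : ∑ P ∈ U.powerset, g P
      = ∑ A ∈ evens, fE A.card *
          (if T0 ∪ A ⊆ T' then -2 * (2:ℚ)^((U \ T').card) else 0) := by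
    have expand : ∀ P ∈ U.powerset, g P = ∑ A ∈ evens,
        fE A.card * ((1 - (if T' ⊆ P then (1:ℚ) else 0) - (if T' ∩ P = ∅ then 1 else 0))
          * (-1:ℚ)^(((T0 ∪ A) ∩ P).card)) := by
      intro P _
      simp only [hg, hw, Finset.mul_sum]
      exact Finset.sum_congr rfl fun A _ => by ring
    rw [Finset.sum_congr rfl expand, Finset.sum_comm]
    refine Finset.sum_congr rfl fun A hA => ?_
    rw [← Finset.mul_sum]
    congr 1
    -- inner character sum for T = T0 ∪ A
    set T := T0 ∪ A with hT
    simp only [Finset.mem_filter, Finset.mem_powerset, hevens] at hA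
    have hAsub : A ⊆ U \ T0 := hA.1
    have hTsub : T ⊆ U := Finset.union_subset h0sub (hAsub.trans Finset.sdiff_subset)
    have hTdisj : Disjoint T0 A := (Disjoint.mono_left hAsub Finset.sdiff_disjoint).symm
    have hTeven : T.card % 2 = 0 := by
      rw [hT, Finset.card_union_of_disjoint hTdisj]
      omega
    have split : ∀ P ∈ U.powerset,
        (1 - (if T' ⊆ P then (1:ℚ) else 0) - (if T' ∩ P = ∅ then 1 else 0))
          * (-1:ℚ)^((T ∩ P).card)
        = (-1:ℚ)^((T ∩ P).card)
          - (if T' ⊆ P then (-1:ℚ)^((T ∩ P).card) else 0)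
          - (if T' ∩ P = ∅ then (-1:ℚ)^((T ∩ P).card) else 0) := by
      intro P _
      by_cases c1 : T' ⊆ P <;> by_cases c2 : T' ∩ P = ∅ <;> simp [c1, c2] <;> ring
    rw [Finset.sum_congr rfl split, Finset.sum_sub_distrib, Finset.sum_sub_distrib,
      ← Finset.sum_filter, ← Finset.sum_filter]
    have hflip : U.powerset.filter (fun P => T' ∩ P = ∅)
        = U.powerset.filter (fun P => P ∩ T' = ∅) := by
      ext P
      simp [Finset.inter_comm]
    rw [sum_chi, hflip, sum_chi_disj T U T' hTsub, sum_chi_supset T U T' hTsub hTeven h'sub]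
    have hTne : ¬ (T ∩ U = ∅) := by
      rw [Finset.inter_eq_left.mpr hTsub, hT]
      intro h
      have := Finset.union_subset_iff.mp (Finset.subset_of_eq h)
      rw [Finset.subset_empty] at this
      rw [this.1] at h0card
      simp at h0card
    rw [if_neg hTne]
    by_cases hcA : T ⊆ T'
    · simp only [if_pos hcA]
      ring
    · simp only [if_neg hcA]
      ring
  rw [step3]
  -- Step 4: final evaluation via fE
  set c : ℚ := -2 * (2:ℚ)^((U \ T').card) with hcdef
  by_cases hc : T0 ⊆ T'
  · have hsets : evens.filter (fun A => T0 ∪ A ⊆ T')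
        = (T' \ T0).powerset.filter (fun A => A.card % 2 = 0) := by
      ext A
      simp only [hevens, Finset.mem_filter, Finset.mem_powerset, Finset.subset_sdiff,
        Finset.union_subset_iff]
      constructor
      · rintro ⟨⟨⟨hAU, hAd⟩, hAe⟩, _, hAT'⟩
        exact ⟨⟨hAT', hAd⟩, hAe⟩
      · rintro ⟨⟨hAT', hAd⟩, hAe⟩
        exact ⟨⟨⟨hAT'.trans h'sub, hAd⟩, hAe⟩, hc, hAT'⟩
    have hcalc : ∑ A ∈ evens, fE A.card * (if T0 ∪ A ⊆ T' then c else 0)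
        = (∑ A ∈ (T' \ T0).powerset.filter (fun A => A.card % 2 = 0), fE A.card) * c :=
      calc ∑ A ∈ evens, fE A.card * (if T0 ∪ A ⊆ T' then c else 0)
          = ∑ A ∈ evens, (if T0 ∪ A ⊆ T' then fE A.card * c else 0) := by
            refine Finset.sum_congr rfl fun A _ => ?_
            by_cases h : T0 ∪ A ⊆ T' <;> simp [h]
        _ = ∑ A ∈ evens.filter (fun A => T0 ∪ A ⊆ T'), fE A.card * c :=
            (Finset.sum_filter _ _).symm
        _ = ∑ A ∈ (T' \ T0).powerset.filter (fun A => A.card % 2 = 0), fE A.card * c := by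
            rw [hsets]
        _ = (∑ A ∈ (T' \ T0).powerset.filter (fun A => A.card % 2 = 0), fE A.card) * c := by
            rw [Finset.sum_mul]
    rw [hcalc, fE_powerset _ (by
      rw [Finset.card_sdiff_of_subset hc]
      have := Finset.card_le_card hc
      omega)]
    by_cases he : T' = T0
    · subst he
      simp
    · have hne : T' \ T0 ≠ ∅ := by
        rw [Ne, Finset.sdiff_eq_empty_iff_subset]
        intro h
        exact he (Finset.Subset.antisymm h hc)
      rw [if_neg hne, if_neg he]
      ring
  · have : ∀ A ∈ evens, fE A.card * (if T0 ∪ A ⊆ T' then c else 0) = 0 := by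
      intro A _
      rw [if_neg (fun h => hc ((Finset.union_subset_iff.mp h).1)), mul_zero]
    rw [Finset.sum_congr rfl this, Finset.sum_const, smul_zero,
      if_neg (fun h => hc (by rw [h]))]

lemma single_mem_range (n : ℕ) (T0 : ↥(Kf (-1) n)) :
    ∃ x : (↥(SPf (-1) n) → ℚ), phiT (-1) n x = Pi.single T0 1 := by
  set k : ℕ := (Finset.Icc 1 n \ T0.val).card with hk
  refine ⟨(-(1:ℚ) / (2 * 2^k)) • (fun B : ↥(SPf (-1) n) => Xfun n T0.val B.val), ?_⟩
  funext T'
  have happ : phiT (-1) n ((-(1:ℚ) / (2 * 2^k)) • (fun B : ↥(SPf (-1) n) => Xfun n T0.val B.val)) T'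
      = (-(1:ℚ) / (2 * 2^k)) * ∑ B : ↥(SPf (-1) n), pairPT B.val T'.val * Xfun n T0.val B.val := by
    simp [phiT, Matrix.mulVecLin_apply, Matrix.mulVec, dotProduct, Matrix.of_apply,
      Finset.mul_sum]
  rw [happ]
  have hcoe : ∑ B : ↥(SPf (-1) n), pairPT B.val T'.val * Xfun n T0.val B.val
      = ∑ B ∈ SPf (-1) n, pairPT B T'.val * Xfun n T0.val B :=
    Finset.sum_coe_sort (SPf (-1) n) (fun B => pairPT B T'.val * Xfun n T0.val B)
  rw [hcoe, key_sum n T0.val T'.val T0.2 T'.2]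
  by_cases he : T' = T0
  · have hv : T'.val = T0.val := by rw [he]
    rw [if_pos hv, he, Pi.single_eq_same, ← hk]
    have h2 : (2:ℚ) * 2^k ≠ 0 := by positivity
    field_simp
  · have hv : ¬ (T'.val = T0.val) := fun h => he (Subtype.ext h)
    rw [if_neg hv, mul_zero, Pi.single_eq_of_ne he]


/-- For every `n ≥ 2`, `φ̃_{−1,n} : ℚSP_{−1,n} → ℚK^{−1}_n` is
surjective. -/
theorem statement14 (n : ℕ) (hn : 2 ≤ n) :
    Function.Surjective (phiT (-1) n) := by
  intro v
  choose xs hxs using fun T0 : ↥(Kf (-1) n) => single_mem_range n T0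
  refine ⟨∑ T0 : ↥(Kf (-1) n), v T0 • xs T0, ?_⟩
  rw [map_sum]
  have hstep : ∀ T0 : ↥(Kf (-1) n), phiT (-1) n (v T0 • xs T0)
      = v T0 • (Pi.single T0 1 : ↥(Kf (-1) n) → ℚ) := by
    intro T0
    rw [map_smul, hxs]
  rw [Finset.sum_congr rfl fun T0 _ => hstep T0]
  funext j
  simp [Finset.sum_apply, Pi.smul_apply, Pi.single_apply, mul_ite]
end

section
/- For every n ≥ 2, define the linear map γ' : ℚF_n → ℚSP_{−1,n+1} by γ'((P₁,P₂)) = {P₁∪{n+1},P₂} − {P₁,P₂∪{n+1}}, where any term in which one of the two parts is empty is taken to be 0. Then φ̃_{−1,n+1} ∘ γ' = α ∘ odd_n as linear maps ℚF_n → ℚK^{−1}_{n+1}. -/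
/-- `γ' : ℚF_n → ℚSP_{−1,n+1}`, `(P₁,P₂) ↦ {P₁∪{n+1},P₂} − {P₁,P₂∪{n+1}}`, where
any term in which one of the two parts is empty is `0` (automatic here, since such
a pair is not a partition in `SP_{−1,n+1}`). -/
noncomputable def gammaP (n : ℕ) : (↥(Fset n) → ℚ) →ₗ[ℚ] (↥(SPf (-1) (n+1)) → ℚ) :=
  Matrix.mulVecLin (Matrix.of fun B p =>
    (if B.val = ({insert (n+1) p.val.1, p.val.2} : Finset (Finset ℕ)) then (1 : ℚ) else 0)
    - (if B.val = ({p.val.1, insert (n+1) p.val.2} : Finset (Finset ℕ)) then (1 : ℚ) else 0))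


lemma sum_ind {A : Type*} [DecidableEq A] (S : Finset A) (f : A → ℚ) (c : A) :
    (∑ x : ↥S, f x.val * (if x.val = c then (1:ℚ) else 0)) = if c ∈ S then f c else 0 := by
  rw [Finset.sum_coe_sort S (fun x => f x * (if x = c then (1:ℚ) else 0))]
  rw [← Finset.sum_ite_eq' S c f]
  apply Finset.sum_congr rfl
  intro x _
  split <;> simp

lemma sum_ins (S : Finset (Finset ℕ)) (m : ℕ) (hm : ∀ x ∈ S, m ∉ x)
    (g : Finset ℕ → ℚ) (c : Finset ℕ) :
    (∑ x : ↥S, (if c = insert m x.val then (1:ℚ) else 0) * g x.val)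
    = if m ∈ c ∧ c.erase m ∈ S then g (c.erase m) else 0 := by
  rw [Finset.sum_coe_sort S (fun x => (if c = insert m x then (1:ℚ) else 0) * g x)]
  by_cases hmc : m ∈ c
  · have key : ∀ x ∈ S, (if c = insert m x then (1:ℚ) else 0) * g x
        = if x = c.erase m then g x else 0 := by
      intro x hx
      have hmx := hm x hx
      by_cases h : x = c.erase m
      · subst h
        rw [if_pos (by rw [Finset.insert_erase hmc]), if_pos rfl, one_mul]
      · rw [if_neg, if_neg h, zero_mul]
        intro hc
        exact h (by rw [hc, Finset.erase_insert hmx])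
    rw [Finset.sum_congr rfl key, Finset.sum_ite_eq']
    split_ifs with h1 h2 h2 <;> tauto
  · rw [if_neg (by tauto)]
    apply Finset.sum_eq_zero
    intro x hx
    rw [if_neg, zero_mul]
    intro hc
    exact hmc (hc ▸ Finset.mem_insert_self m x)

lemma pairPT_pair (A B T : Finset ℕ) :
    pairPT {A, B} T = if (A ∩ T).Nonempty ∧ (B ∩ T).Nonempty then 1 else 0 := by
  unfold pairPT
  apply if_congr _ rfl rfl
  simp [Finset.forall_mem_insert]

lemma mem_SPf_pair (n : ℕ) (A B : Finset ℕ) (hA : A.Nonempty) (hB : B.Nonempty)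
    (hd : A ∩ B = ∅) (hu : A ∪ B = Finset.Icc 1 n) (hne : A ≠ B) :
    ({A, B} : Finset (Finset ℕ)) ∈ SPf (-1) n := by
  simp only [SPf, Finset.mem_filter, Finset.mem_powerset]
  refine ⟨?_, ⟨?_, ?_, ?_⟩, ?_⟩
  · intro X hX
    rw [Finset.mem_powerset]
    rcases Finset.mem_insert.mp hX with h | h
    · subst h; exact hu ▸ Finset.subset_union_left
    · rw [Finset.mem_singleton] at h; subst h; exact hu ▸ Finset.subset_union_right
  · intro P hP
    rcases Finset.mem_insert.mp hP with h | h
    · subst h; exact hA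
    · rw [Finset.mem_singleton] at h; subst h; exact hB
  · intro P hP Q hQ hPQ
    rcases Finset.mem_insert.mp hP with h | h <;>
      [skip; rw [Finset.mem_singleton] at h] <;> subst h <;>
      rcases Finset.mem_insert.mp hQ with h2 | h2 <;>
      [skip; rw [Finset.mem_singleton] at h2; skip; rw [Finset.mem_singleton] at h2] <;>
      subst h2 <;> first | exact absurd rfl hPQ | exact hd | rw [Finset.inter_comm]; exact hd
  · rw [show ({A, B} : Finset (Finset ℕ)).sup id = A ⊔ B by
      simp [Finset.sup_insert, Finset.sup_singleton]]
    exact hu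
  · rw [Finset.card_insert_of_notMem (by simpa using hne), Finset.card_singleton]
    norm_num

lemma empty_not_SPf (n : ℕ) (B : Finset (Finset ℕ)) (h : ∅ ∈ B) : B ∉ SPf (-1) n := by
  simp only [SPf, Finset.mem_filter]
  rintro ⟨-, ⟨hne, -, -⟩, -⟩
  exact Finset.not_nonempty_empty (hne ∅ h)

/-- For every `n ≥ 2`:
`φ̃_{−1,n+1} ∘ γ' = α ∘ odd_n` as linear maps `ℚF_n → ℚK^{−1}_{n+1}`. -/
theorem statement15 (n : ℕ) (hn : 2 ≤ n) :
    (phiT (-1) (n+1)).comp (gammaP n) = (insMap n (Oset n) (Kf (-1) (n+1))).comp (oddMap n) := by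
  unfold phiT gammaP insMap oddMap
  rw [← Matrix.mulVecLin_mul, ← Matrix.mulVecLin_mul]
  congr 1
  ext T p
  simp only [Matrix.mul_apply, Matrix.of_apply]
  obtain ⟨T, hT⟩ := T
  obtain ⟨⟨P1, P2⟩, hp⟩ := p
  simp only
  simp only [Fset, Finset.mem_filter, Finset.mem_product, Finset.mem_powerset] at hp
  obtain ⟨⟨hP1s, hP2s⟩, hun, hdis, h1P1⟩ := hp
  simp only [Kf, Finset.mem_filter, Finset.mem_powerset] at hT
  obtain ⟨hTs, hTc, hTpar⟩ := hT
  have hTc2 : 2 ≤ T.card := by exact_mod_cast (by linarith : (2:ℤ) ≤ (T.card:ℤ))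
  have hTeven : T.card % 2 = 0 := by omega
  have hnotIcc : (n+1) ∉ Finset.Icc 1 n := by simp
  have hnP1 : n+1 ∉ P1 := fun h => hnotIcc (hP1s h)
  have hnP2 : n+1 ∉ P2 := fun h => hnotIcc (hP2s h)
  have hOm : ∀ x ∈ Oset n, n+1 ∉ x := by
    intro x hx hmem
    simp only [Oset, Finset.mem_filter, Finset.mem_powerset] at hx
    exact hnotIcc (hx.1 hmem)
  -- rewrite both sides
  simp_rw [mul_sub]
  rw [Finset.sum_sub_distrib,
    sum_ind (SPf (-1) (n+1)) (fun B => pairPT B T) ({insert (n+1) P1, P2} : Finset (Finset ℕ)),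
    sum_ind (SPf (-1) (n+1)) (fun B => pairPT B T) ({P1, insert (n+1) P2} : Finset (Finset ℕ)),
    sum_ins (Oset n) (n+1) hOm
      (fun U => (if U ⊆ P1 then (-1:ℚ) else 0) + (if U ⊆ P2 then (1:ℚ) else 0)) T]
  -- basic facts
  have hIcc : Finset.Icc 1 (n+1) = insert (n+1) (Finset.Icc 1 n) := by
    ext x; simp [Finset.mem_Icc]; omega
  have hdis' : ∀ x, x ∈ P1 → x ∈ P2 → False := by
    intro x h1 h2
    have hx : x ∈ P1 ∩ P2 := Finset.mem_inter.mpr ⟨h1, h2⟩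
    rw [hdis] at hx
    exact Finset.notMem_empty x hx
  have hc2mem : ({P1, insert (n+1) P2} : Finset (Finset ℕ)) ∈ SPf (-1) (n+1) := by
    apply mem_SPf_pair (n+1) P1 (insert (n+1) P2) ⟨1, h1P1⟩ (Finset.insert_nonempty _ _)
    · rw [Finset.inter_insert_of_notMem hnP1, hdis]
    · rw [Finset.union_insert, hun, hIcc]
    · intro h
      exact hnP1 (h ▸ Finset.mem_insert_self (n+1) P2)
  by_cases hT1 : n + 1 ∈ T
  · -- case n+1 ∈ T
    set U := T.erase (n+1) with hU
    have hUsub : U ⊆ Finset.Icc 1 n := by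
      intro x hx
      obtain ⟨hxne, hxT⟩ := Finset.mem_erase.mp hx
      have := Finset.mem_Icc.mp (hTs hxT)
      rw [Finset.mem_Icc]; omega
    have hUcard : U.card = T.card - 1 := Finset.card_erase_of_mem hT1
    have hUO : U ∈ Oset n := by
      simp only [Oset, Finset.mem_filter, Finset.mem_powerset]
      exact ⟨hUsub, by omega⟩
    have hUne : U.Nonempty := Finset.card_pos.mp (by omega)
    have hUsub' : ∀ x ∈ U, x ∈ P1 ∨ x ∈ P2 := by
      intro x hx
      have : x ∈ P1 ∪ P2 := by rw [hun]; exact hUsub hx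
      exact Finset.mem_union.mp this
    have e1 : (P2 ∩ T).Nonempty ↔ ¬ U ⊆ P1 := by
      constructor
      · rintro ⟨x, hx⟩ hsub
        rw [Finset.mem_inter] at hx
        have hxU : x ∈ U := Finset.mem_erase.mpr ⟨fun h => hnP2 (h ▸ hx.1), hx.2⟩
        exact hdis' x (hsub hxU) hx.1
      · intro hsub
        obtain ⟨x, hxU, hxnP1⟩ := Finset.not_subset.mp hsub
        exact ⟨x, Finset.mem_inter.mpr ⟨(hUsub' x hxU).resolve_left hxnP1,
          Finset.mem_of_mem_erase hxU⟩⟩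
    have e2 : (P1 ∩ T).Nonempty ↔ ¬ U ⊆ P2 := by
      constructor
      · rintro ⟨x, hx⟩ hsub
        rw [Finset.mem_inter] at hx
        have hxU : x ∈ U := Finset.mem_erase.mpr ⟨fun h => hnP1 (h ▸ hx.1), hx.2⟩
        exact hdis' x hx.1 (hsub hxU)
      · intro hsub
        obtain ⟨x, hxU, hxnP2⟩ := Finset.not_subset.mp hsub
        exact ⟨x, Finset.mem_inter.mpr ⟨(hUsub' x hxU).resolve_right hxnP2,
          Finset.mem_of_mem_erase hxU⟩⟩
    have hA1 : ((insert (n+1) P1) ∩ T).Nonempty :=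
      ⟨n+1, Finset.mem_inter.mpr ⟨Finset.mem_insert_self _ _, hT1⟩⟩
    have hA2 : ((insert (n+1) P2) ∩ T).Nonempty :=
      ⟨n+1, Finset.mem_inter.mpr ⟨Finset.mem_insert_self _ _, hT1⟩⟩
    have hnboth : ¬ (U ⊆ P1 ∧ U ⊆ P2) := by
      rintro ⟨h1, h2⟩
      obtain ⟨x, hx⟩ := hUne
      exact hdis' x (h1 hx) (h2 hx)
    have hc1not : P2 = ∅ → ({insert (n+1) P1, P2} : Finset (Finset ℕ)) ∉ SPf (-1) (n+1) := by
      intro h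
      exact empty_not_SPf (n+1) _ (by simp [h])
    by_cases hP2 : P2 = ∅
    · have hUP1 : U ⊆ P1 := fun x hx => (hUsub' x hx).resolve_right (by simp [hP2])
      have hnU2 : ¬ U ⊆ P2 := by
        rw [hP2, Finset.subset_empty]
        exact Finset.nonempty_iff_ne_empty.mp hUne
      simp [pairPT_pair, hc1not hP2, hc2mem, hT1, hUO, e1, e2, hUP1, hnU2, hA2]
    · have hc1mem : ({insert (n+1) P1, P2} : Finset (Finset ℕ)) ∈ SPf (-1) (n+1) := by
        apply mem_SPf_pair (n+1) _ _ (Finset.insert_nonempty _ _)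
          (Finset.nonempty_iff_ne_empty.mpr hP2)
        · rw [Finset.insert_inter_of_notMem hnP2, hdis]
        · rw [Finset.insert_union, hun, hIcc]
        · intro h
          exact hnP2 (h ▸ Finset.mem_insert_self (n+1) P1)
      by_cases hU1 : U ⊆ P1 <;> by_cases hU2 : U ⊆ P2
      · exact absurd ⟨hU1, hU2⟩ hnboth
      · simp [pairPT_pair, hc1mem, hc2mem, hT1, hUO, e1, e2, hA1, hA2, hU1, hU2]
      · simp [pairPT_pair, hc1mem, hc2mem, hT1, hUO, e1, e2, hA1, hA2, hU1, hU2]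
      · simp [pairPT_pair, hc1mem, hc2mem, hT1, hUO, e1, e2, hA1, hA2, hU1, hU2]
  · -- case n+1 ∉ T
    have e1 : ((insert (n+1) P1) ∩ T).Nonempty ↔ (P1 ∩ T).Nonempty := by
      constructor
      · rintro ⟨x, hx⟩
        rw [Finset.mem_inter, Finset.mem_insert] at hx
        obtain ⟨h1 | h1, h2⟩ := hx
        · exact absurd (h1 ▸ h2) hT1
        · exact ⟨x, Finset.mem_inter.mpr ⟨h1, h2⟩⟩
      · rintro ⟨x, hx⟩
        rw [Finset.mem_inter] at hx
        exact ⟨x, Finset.mem_inter.mpr ⟨Finset.mem_insert_of_mem hx.1, hx.2⟩⟩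
    have e2 : ((insert (n+1) P2) ∩ T).Nonempty ↔ (P2 ∩ T).Nonempty := by
      constructor
      · rintro ⟨x, hx⟩
        rw [Finset.mem_inter, Finset.mem_insert] at hx
        obtain ⟨h1 | h1, h2⟩ := hx
        · exact absurd (h1 ▸ h2) hT1
        · exact ⟨x, Finset.mem_inter.mpr ⟨h1, h2⟩⟩
      · rintro ⟨x, hx⟩
        rw [Finset.mem_inter] at hx
        exact ⟨x, Finset.mem_inter.mpr ⟨Finset.mem_insert_of_mem hx.1, hx.2⟩⟩
    have hc1not : P2 = ∅ → ({insert (n+1) P1, P2} : Finset (Finset ℕ)) ∉ SPf (-1) (n+1) := by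
      intro h
      exact empty_not_SPf (n+1) _ (by simp [h])
    by_cases hP2 : P2 = ∅
    · have h2f : ¬ ((insert (n+1) P2) ∩ T).Nonempty := by rw [e2]; simp [hP2]
      simp [pairPT_pair, hc1not hP2, hc2mem, hT1, h2f, hP2]
    · have hc1mem : ({insert (n+1) P1, P2} : Finset (Finset ℕ)) ∈ SPf (-1) (n+1) := by
        apply mem_SPf_pair (n+1) _ _ (Finset.insert_nonempty _ _)
          (Finset.nonempty_iff_ne_empty.mpr hP2)
        · rw [Finset.insert_inter_of_notMem hnP2, hdis]
        · rw [Finset.insert_union, hun, hIcc]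
        · intro h
          exact hnP2 (h ▸ Finset.mem_insert_self (n+1) P1)
      simp [pairPT_pair, hc1mem, hc2mem, hT1, e1, e2]
end

section
/- For every n ≥ 3, the linear map φ̃_{0,n} : ℚSP_{0,n} → ℚK^0_n is surjective. Here SP_{0,n} is the set of set partitions of [n] into exactly 3 nonempty parts, and K^0_n is the set of subsets of [n] of odd cardinality at least 3. -/
/-! ### Auxiliary lemmas for the proof of Statement 16 -/

private lemma alt_sum (X : Finset ℕ) :
    ∑ A ∈ X.powerset, (-1:ℚ)^A.card = if X = ∅ then 1 else 0 := by
  have h := Finset.sum_powerset_neg_one_pow_card (x := X)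
  have h2 : ((∑ m ∈ X.powerset, (-1 : ℤ) ^ m.card : ℤ) : ℚ)
      = ∑ m ∈ X.powerset, (-1:ℚ)^m.card := by push_cast; rfl
  rw [← h2, h]
  split <;> norm_num

private lemma L1 (E S : Finset ℕ) :
    ∑ A ∈ E.powerset, (-1:ℚ)^A.card * (if A ∩ S = ∅ then (1:ℚ) else 0)
      = if E \ S = ∅ then 1 else 0 := by
  simp only [mul_ite, mul_one, mul_zero]
  rw [Finset.sum_ite, Finset.sum_const_zero, add_zero]
  have hfil : E.powerset.filter (fun A => A ∩ S = ∅) = (E \ S).powerset := by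
    ext A
    simp only [Finset.mem_filter, Finset.mem_powerset, Finset.subset_sdiff,
      ← Finset.disjoint_iff_inter_eq_empty]
  rw [hfil, alt_sum]

private lemma L2 (E S : Finset ℕ) :
    ∑ A ∈ E.powerset, (-1:ℚ)^A.card * (if S ⊆ A then (1:ℚ) else 0)
      = if E = S then (-1:ℚ)^E.card else 0 := by
  simp only [mul_ite, mul_one, mul_zero]
  rw [Finset.sum_ite, Finset.sum_const_zero, add_zero]
  by_cases hSE : S ⊆ E
  · have hfil : E.powerset.filter (fun A => S ⊆ A)
        = (E \ S).powerset.image (fun B => B ∪ S) := by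
      ext A
      simp only [Finset.mem_filter, Finset.mem_powerset, Finset.mem_image]
      constructor
      · rintro ⟨hAE, hSA⟩
        exact ⟨A \ S, Finset.sdiff_subset_sdiff hAE (Finset.Subset.refl S),
          Finset.sdiff_union_of_subset hSA⟩
      · rintro ⟨B, hB, rfl⟩
        exact ⟨Finset.union_subset ((hB.trans (Finset.sdiff_subset)).trans
          (Finset.Subset.refl E)) hSE, Finset.subset_union_right⟩
    have hinj : ∀ B ∈ (E \ S).powerset, ∀ B' ∈ (E \ S).powerset,
        B ∪ S = B' ∪ S → B = B' := by
      intro B hB B' hB' h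
      have dB : Disjoint B S := (Finset.subset_sdiff.mp (Finset.mem_powerset.mp hB)).2
      have dB' : Disjoint B' S := (Finset.subset_sdiff.mp (Finset.mem_powerset.mp hB')).2
      ext x
      constructor
      · intro hx
        have hxS : x ∉ S := Finset.disjoint_left.mp dB hx
        have hx2 : x ∈ B' ∪ S := h ▸ Finset.mem_union_left _ hx
        exact (Finset.mem_union.mp hx2).resolve_right hxS
      · intro hx
        have hxS : x ∉ S := Finset.disjoint_left.mp dB' hx
        have hx2 : x ∈ B ∪ S := h.symm ▸ Finset.mem_union_left _ hx
        exact (Finset.mem_union.mp hx2).resolve_right hxS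
    rw [hfil, Finset.sum_image hinj]
    have hcongr : ∀ B ∈ (E \ S).powerset,
        (-1:ℚ)^(B ∪ S).card = (-1:ℚ)^S.card * (-1:ℚ)^B.card := by
      intro B hB
      have hd : Disjoint B S := (Finset.subset_sdiff.mp (Finset.mem_powerset.mp hB)).2
      rw [Finset.card_union_of_disjoint hd, pow_add, mul_comm]
    rw [Finset.sum_congr rfl hcongr, ← Finset.mul_sum, alt_sum]
    by_cases hES : E \ S = ∅
    · have hE : E = S := Finset.Subset.antisymm (Finset.sdiff_eq_empty_iff_subset.mp hES) hSE
      rw [if_pos hES, if_pos hE, hE, mul_one]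
    · have hE : E ≠ S := by
        intro h; subst h; exact hES (Finset.sdiff_self E)
      rw [if_neg hES, if_neg hE, mul_zero]
  · have hfil : E.powerset.filter (fun A => S ⊆ A) = ∅ := by
      rw [Finset.filter_eq_empty_iff]
      intro A hA hSA
      exact hSE (hSA.trans (Finset.mem_powerset.mp hA))
    rw [hfil, Finset.sum_empty, if_neg (by intro h; rw [← h] at hSE; exact hSE (Finset.Subset.refl E))]

private lemma pair_triple (P Q R T : Finset ℕ) :
    pairPT {P, Q, R} T =
      if (P ∩ T).Nonempty ∧ (Q ∩ T).Nonempty ∧ (R ∩ T).Nonempty then 1 else 0 := by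
  rw [pairPT]
  refine if_congr ?_ rfl rfl
  simp [Finset.forall_mem_insert]

private lemma phi_single (d : ℤ) (n : ℕ) (B : ↥(SPf d n)) (T : ↥(Kf d n)) :
    phiT d n (Pi.single B 1) T = pairPT B.1 T.1 := by
  simp [phiT, Matrix.mulVecLin_apply, Matrix.mulVec_single]

private lemma mem_Kf {n : ℕ} {T : Finset ℕ} :
    T ∈ Kf 0 n ↔ T ⊆ Finset.Icc 1 n ∧ 3 ≤ T.card ∧ T.card % 2 = 1 := by
  simp only [Kf, Finset.mem_filter, Finset.mem_powerset]
  constructor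
  · rintro ⟨h1, h2, h3⟩
    exact ⟨h1, by omega, by omega⟩
  · rintro ⟨h1, h2, h3⟩
    exact ⟨h1, by omega, by omega⟩

private lemma step16 (n : ℕ) (T : ↥(Kf 0 n))
    (IH : ∀ T' : ↥(Kf 0 n), T.1 ⊂ T'.1 →
      Pi.single T' (1:ℚ) ∈ LinearMap.range (phiT 0 n)) :
    Pi.single T (1:ℚ) ∈ LinearMap.range (phiT 0 n) := by
  classical
  obtain ⟨hTsub, hTcard, hTmod⟩ := mem_Kf.mp T.2
  have hTne : T.1.Nonempty := Finset.card_pos.mp (by omega)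
  set e := T.1.min' hTne with he_def
  have he : e ∈ T.1 := Finset.min'_mem _ _
  have heI : e ∈ Finset.Icc 1 n := hTsub he
  set M : Finset ℕ := Finset.Icc 1 n \ {e} with hM_def
  have heM : e ∉ M := by simp [hM_def]
  set E : Finset ℕ := T.1.erase e with hE_def
  have hTE : insert e E = T.1 := Finset.insert_erase he
  have heE : e ∉ E := Finset.notMem_erase _ _
  have hEsub : E ⊆ M := by
    intro x hx
    rw [hE_def, Finset.mem_erase] at hx
    rw [hM_def, Finset.mem_sdiff, Finset.mem_singleton]
    exact ⟨hTsub hx.2, hx.1⟩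
  have hEcard : E.card = T.1.card - 1 := Finset.card_erase_of_mem he
  have hEne : E ≠ ∅ := by
    intro h
    have hc := Finset.card_eq_zero.mpr h
    omega
  have hEeven : Even E.card := Nat.even_iff.mpr (by omega)
  set FA : Finset (Finset ℕ) := E.powerset.filter (fun A => A.Nonempty ∧ A ≠ M) with hFA
  have hpart : ∀ A ∈ FA, ({A, M \ A, {e}} : Finset (Finset ℕ)) ∈ SPf 0 n := by
    intro A hA
    rw [hFA, Finset.mem_filter, Finset.mem_powerset] at hA
    obtain ⟨hAE, hAne, hAM⟩ := hA
    have hAM' : A ⊆ M := hAE.trans hEsub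
    have heA : e ∉ A := fun h => heM (hAM' h)
    have hMA : (M \ A).Nonempty := by
      rw [Finset.sdiff_nonempty]
      intro h
      exact hAM (Finset.Subset.antisymm hAM' h)
    have heMA : e ∉ M \ A := fun h => heM (Finset.mem_sdiff.mp h).1
    have hMsubI : M ⊆ Finset.Icc 1 n := Finset.sdiff_subset
    have hAsubI : A ⊆ Finset.Icc 1 n := hAM'.trans hMsubI
    have d1 : A ≠ M \ A := by
      intro h
      obtain ⟨a, ha⟩ := hAne
      exact (Finset.mem_sdiff.mp (h ▸ ha)).2 ha
    have d2 : A ≠ ({e} : Finset ℕ) := by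
      intro h; exact heA (h ▸ Finset.mem_singleton_self e)
    have d3 : M \ A ≠ ({e} : Finset ℕ) := by
      intro h; exact heMA (h ▸ Finset.mem_singleton_self e)
    have hcard3 : ({A, M \ A, {e}} : Finset (Finset ℕ)).card = 3 :=
      Finset.card_eq_three.mpr ⟨A, M \ A, {e}, d1, d2, d3, rfl⟩
    rw [SPf, Finset.mem_filter]
    refine ⟨?_, ⟨?_, ?_, ?_⟩, ?_⟩
    · rw [Finset.mem_powerset]
      intro P hP
      rw [Finset.mem_powerset]
      rcases Finset.mem_insert.mp hP with rfl | hP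
      · exact hAsubI
      rcases Finset.mem_insert.mp hP with rfl | hP
      · exact (Finset.sdiff_subset).trans hMsubI
      · rw [Finset.mem_singleton] at hP; subst hP
        exact Finset.singleton_subset_iff.mpr heI
    · intro P hP
      rcases Finset.mem_insert.mp hP with rfl | hP
      · exact hAne
      rcases Finset.mem_insert.mp hP with rfl | hP
      · exact hMA
      · rw [Finset.mem_singleton] at hP; subst hP
        exact Finset.singleton_nonempty e
    · have i1 : A ∩ (M \ A) = ∅ := Finset.inter_sdiff_self A M
      have i2 : A ∩ ({e} : Finset ℕ) = ∅ := Finset.inter_singleton_of_notMem heA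
      have i3 : (M \ A) ∩ ({e} : Finset ℕ) = ∅ := Finset.inter_singleton_of_notMem heMA
      intro P hP Q hQ hPQ
      simp only [Finset.mem_insert, Finset.mem_singleton] at hP hQ
      rcases hP with rfl | rfl | rfl <;> rcases hQ with rfl | rfl | rfl <;>
        first
          | exact absurd rfl hPQ
          | exact i1
          | exact i2
          | exact i3
          | (rw [Finset.inter_comm]; first | exact i1 | exact i2 | exact i3)
    · have hsup : ({A, M \ A, {e}} : Finset (Finset ℕ)).sup id = A ∪ ((M \ A) ∪ {e}) := by
        simp [Finset.sup_insert, Finset.sup_singleton, Finset.sup_eq_union]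
      rw [hsup, ← Finset.union_assoc, Finset.union_sdiff_of_subset hAM',
        hM_def, Finset.sdiff_union_self_eq_union,
        Finset.union_eq_left.mpr (Finset.singleton_subset_iff.mpr heI)]
    · rw [hcard3]; norm_num
  set w : ↥(Kf 0 n) → ℚ :=
    ∑ A ∈ FA.attach,
      ((-1:ℚ)^(A.1.card)) • phiT 0 n (Pi.single (⟨_, hpart A.1 A.2⟩ : ↥(SPf 0 n)) 1)
    with hw
  have hwR : w ∈ LinearMap.range (phiT 0 n) := by
    rw [hw]
    exact Submodule.sum_mem _
      (fun A _ => Submodule.smul_mem _ _ (LinearMap.mem_range_self _ _))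
  have hwval : ∀ T' : ↥(Kf 0 n),
      w T' = -((if T.1 ⊆ T'.1 then (1:ℚ) else 0) + (if T' = T then (1:ℚ) else 0)) := by
    intro T'
    obtain ⟨hT'sub, hT'card, hT'mod⟩ := mem_Kf.mp T'.2
    have hwT : w T' = ∑ A ∈ FA, (-1:ℚ)^A.card * pairPT {A, M \ A, {e}} T'.1 := by
      rw [hw, Finset.sum_apply,
        ← Finset.sum_attach FA (fun A => (-1:ℚ)^A.card * pairPT {A, M \ A, {e}} T'.1)]
      refine Finset.sum_congr rfl (fun A _ => ?_)
      rw [Pi.smul_apply, phi_single, smul_eq_mul]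
    by_cases heT' : e ∈ T'.1
    · set S : Finset ℕ := T'.1.erase e with hS_def
      have hSne : S.Nonempty := by
        rw [← Finset.card_pos, hS_def, Finset.card_erase_of_mem heT']
        omega
      have hterm : ∀ A ∈ E.powerset,
          (-1:ℚ)^A.card * pairPT {A, M \ A, {e}} T'.1
            = (-1:ℚ)^A.card *
              (1 - (if A ∩ S = ∅ then (1:ℚ) else 0) - (if S ⊆ A then (1:ℚ) else 0)) := by
        intro A hA
        have hAM' : A ⊆ M := (Finset.mem_powerset.mp hA).trans hEsub
        have h1 : A ∩ T'.1 = A ∩ S := by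
          ext x
          constructor
          · intro hx
            rw [Finset.mem_inter] at hx
            have hxM := hAM' hx.1
            rw [hM_def, Finset.mem_sdiff, Finset.mem_singleton] at hxM
            rw [Finset.mem_inter, hS_def, Finset.mem_erase]
            exact ⟨hx.1, hxM.2, hx.2⟩
          · intro hx
            rw [Finset.mem_inter, hS_def, Finset.mem_erase] at hx
            exact Finset.mem_inter.mpr ⟨hx.1, hx.2.2⟩
        have h2 : (M \ A) ∩ T'.1 = S \ A := by
          ext x
          constructor
          · intro hx
            rw [Finset.mem_inter, Finset.mem_sdiff] at hx
            obtain ⟨⟨hxM, hxA⟩, hxT⟩ := hx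
            rw [hM_def, Finset.mem_sdiff, Finset.mem_singleton] at hxM
            rw [Finset.mem_sdiff, hS_def, Finset.mem_erase]
            exact ⟨⟨hxM.2, hxT⟩, hxA⟩
          · intro hx
            rw [Finset.mem_sdiff, hS_def, Finset.mem_erase] at hx
            obtain ⟨⟨hxe, hxT⟩, hxA⟩ := hx
            rw [Finset.mem_inter, Finset.mem_sdiff, hM_def, Finset.mem_sdiff,
              Finset.mem_singleton]
            exact ⟨⟨⟨hT'sub hxT, hxe⟩, hxA⟩, hxT⟩
        have h3 : (({e} : Finset ℕ) ∩ T'.1).Nonempty :=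
          ⟨e, Finset.mem_inter.mpr ⟨Finset.mem_singleton_self e, heT'⟩⟩
        rw [pair_triple, h1, h2]
        have hite : (if ((A ∩ S).Nonempty ∧ (S \ A).Nonempty ∧
              (({e} : Finset ℕ) ∩ T'.1).Nonempty) then (1:ℚ) else 0)
            = 1 - (if A ∩ S = ∅ then (1:ℚ) else 0) - (if S ⊆ A then (1:ℚ) else 0) := by
          by_cases hp : (A ∩ S).Nonempty
          · rw [if_neg (Finset.nonempty_iff_ne_empty.mp hp)]
            by_cases hq : S ⊆ A
            · rw [if_pos hq, if_neg]
              · ring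
              · rintro ⟨-, h2', -⟩
                rw [Finset.sdiff_eq_empty_iff_subset.mpr hq] at h2'
                exact Finset.not_nonempty_empty h2'
            · rw [if_neg hq, if_pos ⟨hp, Finset.sdiff_nonempty.mpr hq, h3⟩]
              ring
          · have hpe : A ∩ S = ∅ := Finset.not_nonempty_iff_eq_empty.mp hp
            have hq : ¬ S ⊆ A := by
              intro h
              obtain ⟨x, hx⟩ := hSne
              exact hp ⟨x, Finset.mem_inter.mpr ⟨h hx, hx⟩⟩
            rw [if_pos hpe, if_neg hq, if_neg (fun hc => hp hc.1)]
            ring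
        rw [hite]
      have hext : ∑ A ∈ FA, (-1:ℚ)^A.card * pairPT {A, M \ A, {e}} T'.1
          = ∑ A ∈ E.powerset, (-1:ℚ)^A.card * pairPT {A, M \ A, {e}} T'.1 := by
        refine Finset.sum_subset (by rw [hFA]; exact Finset.filter_subset _ _) ?_
        intro A hA hA'
        rw [hFA, Finset.mem_filter] at hA'
        have hnA : ¬(A.Nonempty ∧ A ≠ M) := fun h => hA' ⟨hA, h⟩
        rw [pair_triple]
        by_cases hAe : A = ∅
        · subst hAe
          rw [if_neg, mul_zero]
          rintro ⟨h1', -⟩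
          simp at h1'
        · have hAMeq : A = M := by
            by_contra hne
            exact hnA ⟨Finset.nonempty_iff_ne_empty.mpr hAe, hne⟩
          subst hAMeq
          rw [if_neg, mul_zero]
          rintro ⟨-, h2', -⟩
          rw [Finset.sdiff_self] at h2'
          simp at h2'
      have expand : ∑ A ∈ E.powerset, (-1:ℚ)^A.card *
            (1 - (if A ∩ S = ∅ then (1:ℚ) else 0) - (if S ⊆ A then (1:ℚ) else 0))
          = (∑ A ∈ E.powerset, (-1:ℚ)^A.card)
            - (∑ A ∈ E.powerset, (-1:ℚ)^A.card * (if A ∩ S = ∅ then (1:ℚ) else 0))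
            - (∑ A ∈ E.powerset, (-1:ℚ)^A.card * (if S ⊆ A then (1:ℚ) else 0)) := by
        rw [← Finset.sum_sub_distrib, ← Finset.sum_sub_distrib]
        exact Finset.sum_congr rfl (fun A _ => by ring)
      rw [hwT, hext, Finset.sum_congr rfl hterm, expand, alt_sum, L1, L2, if_neg hEne]
      have e1 : (E \ S = ∅) ↔ (T.1 ⊆ T'.1) := by
        rw [Finset.sdiff_eq_empty_iff_subset]
        constructor
        · intro h
          rw [← hTE, Finset.insert_subset_iff]
          exact ⟨heT', h.trans (Finset.erase_subset _ _)⟩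
        · intro h x hx
          rw [hS_def, Finset.mem_erase]
          have hxT : x ∈ T.1 := by rw [← hTE]; exact Finset.mem_insert_of_mem hx
          refine ⟨?_, h hxT⟩
          rw [hE_def, Finset.mem_erase] at hx
          exact hx.1
      have e2 : (E = S) ↔ (T' = T) := by
        constructor
        · intro h
          apply Subtype.ext
          rw [← Finset.insert_erase heT', ← hS_def, ← h]
          exact hTE
        · intro h
          rw [hE_def, hS_def, h]
      rw [hEeven.neg_one_pow, if_congr e1 rfl rfl, if_congr e2 rfl rfl]
      ring
    · have n1 : ¬ T.1 ⊆ T'.1 := fun h => heT' (h he)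
      have n2 : ¬ T' = T := fun h => heT' (by rw [h]; exact he)
      have hz : w T' = 0 := by
        rw [hwT]
        refine Finset.sum_eq_zero (fun A hA => ?_)
        rw [pair_triple, if_neg, mul_zero]
        rintro ⟨-, -, h3'⟩
        obtain ⟨x, hx⟩ := h3'
        rw [Finset.mem_inter, Finset.mem_singleton] at hx
        exact heT' (hx.1 ▸ hx.2)
      rw [hz, if_neg n1, if_neg n2]
      ring
  have heq : Pi.single T (1:ℚ)
      = (2:ℚ)⁻¹ • (((-1:ℚ) • w)
          - ∑ T' ∈ Finset.univ.filter (fun T' : ↥(Kf 0 n) => T.1 ⊂ T'.1),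
              Pi.single T' (1:ℚ)) := by
    have hsum : ∀ t : ↥(Kf 0 n),
        (∑ T' ∈ Finset.univ.filter (fun T' : ↥(Kf 0 n) => T.1 ⊂ T'.1),
            Pi.single T' (1:ℚ)) t = if T.1 ⊂ t.1 then (1:ℚ) else 0 := by
      intro t
      rw [Finset.sum_apply]
      simp only [Pi.single_apply]
      rw [Finset.sum_ite_eq]
      simp
    funext t
    rw [Pi.smul_apply, Pi.sub_apply, Pi.smul_apply, hwval t, hsum t, Pi.single_apply]
    simp only [smul_eq_mul]
    by_cases ht : t = T
    · subst ht
      rw [if_pos rfl, if_pos (Finset.Subset.refl _),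
        if_neg (fun h => (Finset.ssubset_iff_subset_ne.mp h).2 rfl)]
      norm_num
    · have hne : T.1 ≠ t.1 := fun h => ht (Subtype.ext h.symm)
      rw [if_neg ht]
      by_cases hsub : T.1 ⊆ t.1
      · rw [if_pos hsub, if_pos (Finset.ssubset_iff_subset_ne.mpr ⟨hsub, hne⟩)]
        ring
      · rw [if_neg hsub, if_neg (fun h => hsub (Finset.ssubset_iff_subset_ne.mp h).1)]
        ring
  rw [heq]
  refine Submodule.smul_mem _ _ (Submodule.sub_mem _ (Submodule.smul_mem _ _ hwR) ?_)
  refine Submodule.sum_mem _ (fun T' hT' => ?_)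
  exact IH T' (Finset.mem_filter.mp hT').2

/-- For every `n ≥ 3`, `φ̃_{0,n} : ℚSP_{0,n} → ℚK^0_n` is
surjective. -/
theorem statement16 (n : ℕ) (hn : 3 ≤ n) :
    Function.Surjective (phiT 0 n) := by
  rw [← LinearMap.range_eq_top]
  have key : ∀ (k : ℕ) (T : ↑(Kf 0 n)), n - T.1.card ≤ k →
      Pi.single T (1:ℚ) ∈ LinearMap.range (phiT 0 n) := by
    intro k
    induction k with
    | zero =>
      intro T hT
      refine step16 n T (fun T' hT' => ?_)
      exfalso
      obtain ⟨hsub, -, -⟩ := mem_Kf.mp T'.2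
      have h1 : T'.1.card ≤ n := by
        have h := Finset.card_le_card hsub
        rwa [Nat.card_Icc, Nat.add_sub_cancel] at h
      have h2 := Finset.card_lt_card hT'
      omega
    | succ k ih =>
      intro T hT
      refine step16 n T (fun T' hT' => ih T' ?_)
      have h2 := Finset.card_lt_card hT'
      omega
  rw [Submodule.eq_top_iff']
  intro x
  have hx : x = ∑ T : ↑(Kf 0 n), x T • (Pi.single T (1:ℚ) : ↑(Kf 0 n) → ℚ) := by
    funext t
    simp only [Finset.sum_apply, Pi.smul_apply, Pi.single_apply, smul_eq_mul,
      mul_ite, mul_one, mul_zero]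
    rw [Finset.sum_ite_eq]
    simp
  rw [hx]
  exact Submodule.sum_mem _ (fun T _ => Submodule.smul_mem _ _ (key n T (Nat.sub_le _ _)))
end
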